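/- Uniform tail integral bound: Let δ > 0 and let d ∈ C^ω_δ(𝕋,ℂ) be not identically zero, satisfying an (α, ε₀)-transversality condition: μ{x ∈ 𝕋 : |d(x)| < ε} < ε^α for 0 < ε < ε₀. Fix β ∈ ℝ and i, j ∈ ℤ, and set d_i(x) = d(x + iβ), d_j(x) = d(x + jβ). Then there is a constant C = C(α, ‖d‖_δ) such that for all sufficiently small ε > 0, |∫_{{x : |d_i(x)| < ε}} log|d_j(x)| dx| ≤ C·ε^α·|log ε|. -/

import Mathlib

open MeasureTheory

lemma periodic_set_int (E : Set ℝ) (hp : ∀ x, x ∈ E ↔ x + 1 ∈ E) :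
    ∀ (n : ℤ) (x : ℝ), x + n ∈ E ↔ x ∈ E := by
  intro n
  induction n using Int.induction_on with
  | zero => simp
  | succ k ih =>
    intro x
    have h2 := hp (x + (k:ℝ))
    have h3 := ih x
    push_cast at h3 ⊢
    rw [show x + ((k:ℝ)+1) = x + (k:ℝ) + 1 by ring, ← h2]
    exact h3
  | pred k ih =>
    intro x
    have h2 := hp (x - (k:ℝ) - 1)
    have h3 := ih x
    push_cast at h3 ⊢
    rw [show x + (-(k:ℝ) - 1) = x - (k:ℝ) - 1 by ring, h2,
      show x - (k:ℝ) - 1 + 1 = x + -(k:ℝ) by ring]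
    exact h3

lemma vol_inter_Ico_periodic (E : Set ℝ) (hE : MeasurableSet E)
    (hp : ∀ x, x ∈ E ↔ x + 1 ∈ E) (s : ℝ) :
    volume (E ∩ Set.Ico s (s + 1)) = volume (E ∩ Set.Ico 0 1) := by
  have hZ := periodic_set_int E hp
  have hshift : ∀ (a : ℝ) (n : ℤ),
      volume (E ∩ Set.Ico a (a + 1)) = volume (E ∩ Set.Ico (a - n) (a - n + 1)) := by
    intro a n
    have hpre : (fun x => x + (n : ℝ)) ⁻¹' (E ∩ Set.Ico a (a + 1))
        = E ∩ Set.Ico (a - n) (a - n + 1) := by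
      ext x
      simp only [Set.mem_preimage, Set.mem_inter_iff, Set.mem_Ico]
      rw [hZ n x]
      constructor
      · rintro ⟨h1, h2, h3⟩; exact ⟨h1, by linarith, by linarith⟩
      · rintro ⟨h1, h2, h3⟩; exact ⟨h1, by linarith, by linarith⟩
    rw [← hpre, measure_preimage_add_right]
  set u : ℝ := Int.fract s with hu
  have hu0 : 0 ≤ u := Int.fract_nonneg s
  have hu1 : u < 1 := Int.fract_lt_one s
  have h1 : volume (E ∩ Set.Ico s (s + 1)) = volume (E ∩ Set.Ico u (u + 1)) := by
    have := hshift s ⌊s⌋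
    rwa [show s - (⌊s⌋ : ℝ) = u by rw [hu, Int.self_sub_floor]] at this
  have hsplit1 : Set.Ico u (u + 1) = Set.Ico u 1 ∪ Set.Ico 1 (u + 1) :=
    (Set.Ico_union_Ico_eq_Ico hu1.le (by linarith)).symm
  have hsplit2 : Set.Ico (0:ℝ) 1 = Set.Ico 0 u ∪ Set.Ico u 1 :=
    (Set.Ico_union_Ico_eq_Ico hu0 hu1.le).symm
  have hd1 : Disjoint (E ∩ Set.Ico u 1) (E ∩ Set.Ico 1 (u + 1)) :=
    (Set.Ico_disjoint_Ico_same).mono Set.inter_subset_right Set.inter_subset_right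
  have hd2 : Disjoint (E ∩ Set.Ico (0:ℝ) u) (E ∩ Set.Ico u 1) :=
    (Set.Ico_disjoint_Ico_same).mono Set.inter_subset_right Set.inter_subset_right
  have htr : volume (E ∩ Set.Ico 1 (u + 1)) = volume (E ∩ Set.Ico 0 u) := by
    have hpre : (fun x => x + (1 : ℝ)) ⁻¹' (E ∩ Set.Ico 1 (u + 1)) = E ∩ Set.Ico 0 u := by
      ext x
      simp only [Set.mem_preimage, Set.mem_inter_iff, Set.mem_Ico]
      rw [← hp x]
      constructor
      · rintro ⟨h1, h2, h3⟩; exact ⟨h1, by linarith, by linarith⟩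
      · rintro ⟨h1, h2, h3⟩; exact ⟨h1, by linarith, by linarith⟩
    rw [← hpre, measure_preimage_add_right]
  rw [h1, hsplit1, Set.inter_union_distrib_left,
    measure_union hd1 (hE.inter measurableSet_Ico), htr,
    hsplit2, Set.inter_union_distrib_left,
    measure_union hd2 (hE.inter measurableSet_Ico), add_comm]

open scoped ENNReal


set_option maxHeartbeats 1000000 in
/-- Uniform tail integral bound: let `d` be 1-periodic, holomorphic on a neighborhood
of the strip `{|Im z| ≤ δ}`, not identically zero, satisfying an
`(α, ε₀)`-transversality condition `μ{x : |d x| < ε} < ε^α` for `0 < ε < ε₀`. Then for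
fixed `β ∈ ℝ` and `i, j ∈ ℤ` there is a constant `C` such that for all sufficiently
small `ε > 0`, `|∫_{{x : |d(x+iβ)| < ε}} log |d(x+jβ)| dx| ≤ C ε^α |log ε|`. -/
theorem uniform_tail_integral_bound (δ α ε₀ : ℝ) (hδ : 0 < δ) (hα0 : 0 < α)
    (hα1 : α ≤ 1) (hε₀ : 0 < ε₀) (U : Set ℂ) (hU : IsOpen U)
    (hsub : {z : ℂ | |z.im| ≤ δ} ⊆ U) (d : ℂ → ℂ) (hd : DifferentiableOn ℂ d U)
    (hper : ∀ z, d (z + 1) = d z) (hd0 : ∃ z : ℂ, |z.im| ≤ δ ∧ d z ≠ 0)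
    (htrans : ∀ ε : ℝ, 0 < ε → ε < ε₀ →
      volume {x ∈ Set.Ico (0:ℝ) 1 | ‖d x‖ < ε} < ENNReal.ofReal (ε ^ α))
    (β : ℝ) (i j : ℤ) :
    ∃ C > 0, ∃ ε₁ > 0, ∀ ε : ℝ, 0 < ε → ε < ε₁ →
      |∫ x in {x ∈ Set.Ico (0:ℝ) 1 | ‖d ((x + i * β : ℝ))‖ < ε},
          Real.log ‖d ((x + j * β : ℝ))‖| ≤ C * ε ^ α * |Real.log ε| := by
  classical
  have hmemU : ∀ x : ℝ, (x : ℂ) ∈ U := fun x => hsub (by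
    simp only [Set.mem_setOf_eq, Complex.ofReal_im, abs_zero]; exact hδ.le)
  have hcd : Continuous fun x : ℝ => d x := by
    rw [continuous_iff_continuousAt]
    intro x
    exact (hd.continuousOn.continuousAt (hU.mem_nhds (hmemU x))).comp
      Complex.continuous_ofReal.continuousAt
  have habs : Continuous fun x : ℝ => ‖d x‖ := continuous_norm.comp hcd
  have hperR : Function.Periodic (fun x : ℝ => ‖d x‖) 1 := by
    intro x
    simp only [Complex.ofReal_add, Complex.ofReal_one, hper]
  -- global bound M
  obtain ⟨x₀, -, hx₀⟩ := isCompact_Icc.exists_isMaxOn (Set.nonempty_Icc.2 zero_le_one)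
    (habs.continuousOn : ContinuousOn _ (Set.Icc (0:ℝ) 1))
  set M : ℝ := max 2 (‖d x₀‖) with hM
  have hM2 : (2:ℝ) ≤ M := hM ▸ le_max_left _ _
  have hMb : ∀ x : ℝ, ‖d x‖ ≤ M := by
    intro x
    have h1 : ‖d ((Int.fract x : ℝ))‖ = ‖d x‖ := by
      have := hperR.sub_int_mul_eq (x := x) (n := ⌊x⌋)
      simpa [Int.self_sub_floor] using this
    have h2 : Int.fract x ∈ Set.Icc (0:ℝ) 1 :=
      ⟨Int.fract_nonneg x, (Int.fract_lt_one x).le⟩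
    calc ‖d x‖ = ‖d ((Int.fract x : ℝ))‖ := h1.symm
      _ ≤ ‖d x₀‖ := hx₀ h2
      _ ≤ M := hM ▸ le_max_right _ _
  clear_value M
  have hlogM : 0 < Real.log M := Real.log_pos (by linarith)
  -- key translated measure bound
  have key : ∀ (s u : ℝ), 0 < u → u < ε₀ →
      volume {x ∈ Set.Ico (0:ℝ) 1 | ‖d ((x + s : ℝ))‖ < u}
        ≤ ENNReal.ofReal (u ^ α) := by
    intro s u hu0 hu1
    set E : Set ℝ := {x : ℝ | ‖d x‖ < u} with hE
    have hEm : MeasurableSet E :=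
      measurableSet_lt habs.measurable measurable_const
    have hEp : ∀ x, x ∈ E ↔ x + 1 ∈ E := by
      intro x
      have h : ‖d ((x + 1 : ℝ) : ℂ)‖ = ‖d (x : ℂ)‖ := hperR x
      simp only [hE, Set.mem_setOf_eq, h]
    have h1 : {x ∈ Set.Ico (0:ℝ) 1 | ‖d ((x + s : ℝ))‖ < u}
        = (fun x => x + s) ⁻¹' (E ∩ Set.Ico s (s + 1)) := by
      ext x
      simp only [Set.mem_setOf_eq, Set.mem_preimage, Set.mem_inter_iff, Set.mem_Ico, hE]
      constructor
      · rintro ⟨⟨h2, h3⟩, h4⟩; exact ⟨h4, by linarith, by linarith⟩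
      · rintro ⟨h4, h2, h3⟩; exact ⟨⟨by linarith, by linarith⟩, h4⟩
    have h2 : E ∩ Set.Ico 0 1 = {x ∈ Set.Ico (0:ℝ) 1 | ‖d x‖ < u} := by
      ext x
      simp only [hE, Set.mem_inter_iff, Set.mem_setOf_eq, and_comm]
    rw [h1, measure_preimage_add_right, vol_inter_Ico_periodic E hEm hEp s, h2]
    exact (htrans u hu0 hu1).le
  -- constants
  set t : ℝ := (2:ℝ) ^ (α / 2 : ℝ) with htdef
  clear_value t
  have ht1 : 1 < t := by
    rw [htdef, Real.one_lt_rpow_iff_of_pos (by norm_num)]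
    left; constructor <;> [norm_num; linarith]
  have ht0 : 0 < t := zero_lt_one.trans ht1
  have ht2 : t ≤ 2 := by
    calc t = (2:ℝ) ^ (α/2 : ℝ) := htdef
      _ ≤ (2:ℝ) ^ (1:ℝ) := Real.rpow_le_rpow_of_exponent_le one_le_two (by linarith)
      _ = 2 := Real.rpow_one 2
  have htm : 0 < t - 1 := by linarith
  have hti : 0 < 1 - 1/t := by
    rw [sub_pos, div_lt_one ht0]; exact ht1
  set C : ℝ := (Real.log M + 1) + 2 * (t - 1)⁻¹ * (1 - 1/t)⁻¹ with hC
  clear_value C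
  have hC0 : 0 < C := by
    have h1 : 0 ≤ 2 * (t - 1)⁻¹ * (1 - 1/t)⁻¹ :=
      mul_nonneg (mul_nonneg (by norm_num) (inv_nonneg.2 htm.le)) (inv_nonneg.2 hti.le)
    linarith
  refine ⟨C, hC0, min ε₀ (Real.exp (-1)), lt_min hε₀ (Real.exp_pos _), ?_⟩
  intro ε hε0 hε1
  have hεε₀ : ε < ε₀ := lt_of_lt_of_le hε1 (min_le_left _ _)
  have hεe : ε < Real.exp (-1) := lt_of_lt_of_le hε1 (min_le_right _ _)
  have hεlt1 : ε < 1 := hεe.trans (Real.exp_lt_one_iff.2 (by norm_num))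
  set L : ℝ := |Real.log ε| with hLdef
  clear_value L
  have hlogneg : Real.log ε < 0 := Real.log_neg hε0 hεlt1
  have hLeq : L = - Real.log ε := by rw [hLdef]; exact abs_of_neg hlogneg
  have hL1 : 1 ≤ L := by
    have h1 : Real.log ε ≤ Real.log (Real.exp (-1)) := Real.log_le_log hε0 hεe.le
    rw [Real.log_exp] at h1
    rw [hLeq]; linarith
  have hεα : (0:ℝ) ≤ ε ^ α := Real.rpow_nonneg hε0.le α
  set g : ℝ → ℝ := fun x => ‖d ((x + j * β : ℝ))‖ with hg
  set A : Set ℝ := {x ∈ Set.Ico (0:ℝ) 1 | ‖d ((x + i * β : ℝ))‖ < ε} with hA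
  have hg0 : ∀ x, 0 ≤ g x := fun x => norm_nonneg _
  have hgM : ∀ x, g x ≤ M := fun x => hMb _
  -- sets
  set P : Set ℝ := {x ∈ A | ε ≤ g x} with hP
  set Z : Set ℝ := {x ∈ Set.Ico (0:ℝ) 1 | g x = 0} with hZ
  set S : ℕ → Set ℝ :=
    fun k => {x ∈ Set.Ico (0:ℝ) 1 | ε / 2 ^ (k+1) ≤ g x ∧ g x < ε / 2 ^ k} with hS
  have hcover : A ⊆ P ∪ (Z ∪ ⋃ k, S k) := by
    intro x hx
    rcases le_or_gt ε (g x) with h | h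
    · exact Or.inl ⟨hx, h⟩
    refine Or.inr ?_
    rcases (hg0 x).eq_or_lt with h0 | h0
    · exact Or.inl ⟨hx.1, h0.symm⟩
    refine Or.inr ?_
    have hex : ∃ k : ℕ, ε / 2 ^ (k+1) ≤ g x := by
      obtain ⟨n, hn⟩ := pow_unbounded_of_one_lt (ε / g x) (one_lt_two (α := ℝ))
      refine ⟨n, ?_⟩
      rw [div_lt_iff₀ h0] at hn
      rw [div_le_iff₀ (by positivity)]
      have h2 : (2:ℝ) ^ n ≤ 2 ^ (n+1) := by
        rw [pow_succ]; nlinarith [pow_pos (zero_lt_two (α := ℝ)) n]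
      nlinarith [pow_pos (zero_lt_two (α := ℝ)) n]
    set k := Nat.find hex with hk
    have hks := Nat.find_spec hex
    refine Set.mem_iUnion.2 ⟨k, hx.1, hks, ?_⟩
    rcases Nat.eq_zero_or_pos k with hk0 | hk0
    · rw [hk0]; simpa using h
    · have hmin := Nat.find_min hex (Nat.sub_lt hk0 one_pos)
      rw [show Nat.find hex - 1 + 1 = Nat.find hex from Nat.succ_pred_eq_of_pos hk0] at hmin
      exact lt_of_not_ge hmin
  -- pieces
  have bound1 : ∫⁻ x in P, ENNReal.ofReal |Real.log (g x)| ∂volume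
      ≤ ENNReal.ofReal ((Real.log M + L) * ε ^ α) := by
    have hpt : ∀ x ∈ P, ENNReal.ofReal |Real.log (g x)|
        ≤ ENNReal.ofReal (Real.log M + L) := by
      rintro x ⟨hxA, hεg⟩
      refine ENNReal.ofReal_le_ofReal ?_
      rcases le_or_gt 1 (g x) with h | h
      · rw [abs_of_nonneg (Real.log_nonneg h)]
        have h2 : Real.log (g x) ≤ Real.log M := Real.log_le_log (by linarith) (hgM x)
        have h3 : 0 ≤ L := le_trans zero_le_one hL1
        linarith
      · rw [abs_of_nonpos (Real.log_nonpos (hg0 x) h.le)]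
        have h2 : Real.log ε ≤ Real.log (g x) := Real.log_le_log hε0 hεg
        rw [hLeq] at *
        linarith
    calc ∫⁻ x in P, ENNReal.ofReal |Real.log (g x)| ∂volume
        ≤ ∫⁻ _ in P, ENNReal.ofReal (Real.log M + L) ∂volume :=
          setLIntegral_mono measurable_const hpt
      _ = ENNReal.ofReal (Real.log M + L) * volume P := setLIntegral_const _ _
      _ ≤ ENNReal.ofReal (Real.log M + L) * ENNReal.ofReal (ε ^ α) := by
          refine mul_le_mul_right ?_ _
          refine le_trans (measure_mono (Set.sep_subset _ _)) ?_
          exact key ((i:ℝ) * β) ε hε0 hεε₀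
      _ = ENNReal.ofReal ((Real.log M + L) * ε ^ α) :=
          (ENNReal.ofReal_mul (by linarith)).symm
  have bound2 : ∫⁻ x in Z, ENNReal.ofReal |Real.log (g x)| ∂volume = 0 := by
    have h1 : ∫⁻ x in Z, ENNReal.ofReal |Real.log (g x)| ∂volume
        ≤ ∫⁻ _ in Z, (0:ℝ≥0∞) ∂volume := by
      refine setLIntegral_mono measurable_const ?_
      rintro x ⟨-, hx2⟩
      simp [hx2]
    simpa using h1
  have bound3 : ∫⁻ x in ⋃ k, S k, ENNReal.ofReal |Real.log (g x)| ∂volume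
      ≤ ENNReal.ofReal (2 * L * (ε ^ α) * (t-1)⁻¹ * (1 - 1/t)⁻¹) := by
    have hterm : ∀ k : ℕ, ∫⁻ x in S k, ENNReal.ofReal |Real.log (g x)| ∂volume
        ≤ ENNReal.ofReal (2 * L * (ε ^ α) * (t-1)⁻¹) * (ENNReal.ofReal (1/t)) ^ k := by
      intro k
      have hpt : ∀ x ∈ S k, ENNReal.ofReal |Real.log (g x)|
          ≤ ENNReal.ofReal ((k+1) * (2*L)) := by
        rintro x ⟨hx1, hx2, hx3⟩
        refine ENNReal.ofReal_le_ofReal ?_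
        have hgpos : 0 < g x := lt_of_lt_of_le (div_pos hε0 (by positivity)) hx2
        have hgε : g x < ε := lt_of_lt_of_le hx3 (div_le_self hε0.le (one_le_pow₀ (one_le_two (α := ℝ))))
        have h1 : Real.log (ε / 2 ^ (k+1)) ≤ Real.log (g x) :=
          Real.log_le_log (div_pos hε0 (by positivity)) hx2
        have h2 : Real.log (ε / 2 ^ (k+1)) = Real.log ε - (k+1) * Real.log 2 := by
          rw [Real.log_div hε0.ne' (by positivity), Real.log_pow]
          push_cast; ring
        have h3 : Real.log (g x) < 0 := Real.log_neg hgpos (by linarith)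
        have hlog2 : Real.log 2 ≤ 1 := Real.log_two_lt_d9.le.trans (by norm_num)
        have hlog2' : 0 < Real.log 2 := Real.log_pos one_lt_two
        rw [abs_of_nonpos h3.le, hLeq]
        have hk0 : (0:ℝ) ≤ (k:ℝ) := Nat.cast_nonneg k
        have hL0 : (0:ℝ) ≤ L := le_trans zero_le_one hL1
        have hlog2L : Real.log 2 ≤ L := by linarith
        rw [hLeq] at hL1 hL0 hlog2L
        nlinarith [mul_le_mul_of_nonneg_left hlog2L (by positivity : (0:ℝ) ≤ (k:ℝ)+1),
          mul_nonneg hk0 hL0]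
      have hvol : volume (S k) ≤ ENNReal.ofReal ((ε / 2 ^ k) ^ α) := by
        refine le_trans (measure_mono ?_) (key ((j:ℝ) * β) (ε / 2 ^ k) (div_pos hε0 (by positivity)) ?_)
        · rintro x ⟨hx1, hx2, hx3⟩; exact ⟨hx1, hx3⟩
        · exact lt_of_le_of_lt (div_le_self hε0.le (one_le_pow₀ (one_le_two (α := ℝ)))) hεε₀
      have hreal : ((k:ℝ)+1) * (2*L) * ((ε / 2 ^ k) ^ α)
          ≤ 2 * L * (ε ^ α) * (t-1)⁻¹ * (1/t) ^ k := by
        have hb : ((k:ℝ)+1) ≤ (t-1)⁻¹ * t ^ k := by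
          have h1 : 1 + (k:ℝ) * (t-1) ≤ t ^ k := by
            have h2 := one_add_mul_le_pow (a := t - 1) (by linarith) k
            simpa using h2
          have h4 : ((k:ℝ)+1) * (t-1) ≤ t ^ k := by nlinarith
          calc ((k:ℝ)+1) = ((k:ℝ)+1) * (t-1) * (t-1)⁻¹ := by field_simp
            _ ≤ t ^ k * (t-1)⁻¹ := mul_le_mul_of_nonneg_right h4 (inv_nonneg.2 htm.le)
            _ = (t-1)⁻¹ * t ^ k := mul_comm _ _
        have heq : (ε / 2 ^ k) ^ α = ε ^ α / t ^ (2*k) := by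
          rw [Real.div_rpow hε0.le (by positivity)]
          congr 1
          rw [← Real.rpow_natCast (2:ℝ) k, ← Real.rpow_mul (by norm_num : (0:ℝ) ≤ 2)]
          rw [htdef, ← Real.rpow_natCast ((2:ℝ) ^ (α/2 : ℝ)) (2*k),
            ← Real.rpow_mul (by norm_num : (0:ℝ) ≤ 2)]
          congr 1
          push_cast; ring
        have ht2k : t ^ (2*k) = t ^ k * t ^ k := by rw [two_mul, pow_add]
        have htk : (0:ℝ) < t ^ k := pow_pos ht0 k
        have hstep : ((k:ℝ)+1) * (2*L) * ((ε / 2 ^ k) ^ α)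
            ≤ ((t-1)⁻¹ * t ^ k) * (2*L) * (ε ^ α / t ^ (2*k)) := by
          rw [heq]
          have hL0 : (0:ℝ) ≤ L := le_trans zero_le_one hL1
          have hnn : (0:ℝ) ≤ (2*L) * (ε ^ α / t ^ (2*k)) :=
            mul_nonneg (by linarith) (div_nonneg hεα (pow_nonneg ht0.le _))
          nlinarith [mul_le_mul_of_nonneg_right hb hnn]
        refine le_trans hstep (le_of_eq ?_)
        rw [ht2k]
        field_simp
        ring_nf
        rw [← mul_pow, mul_inv_cancel₀ ht0.ne', one_pow]
      calc ∫⁻ x in S k, ENNReal.ofReal |Real.log (g x)| ∂volume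
          ≤ ∫⁻ _ in S k, ENNReal.ofReal ((k+1) * (2*L)) ∂volume :=
            setLIntegral_mono measurable_const hpt
        _ = ENNReal.ofReal ((k+1) * (2*L)) * volume (S k) := setLIntegral_const _ _
        _ ≤ ENNReal.ofReal ((k+1) * (2*L)) * ENNReal.ofReal ((ε / 2 ^ k) ^ α) :=
            mul_le_mul_right hvol _
        _ = ENNReal.ofReal (((k:ℝ)+1) * (2*L) * ((ε / 2 ^ k) ^ α)) := by
            rw [← ENNReal.ofReal_mul (mul_nonneg (by positivity : (0:ℝ) ≤ (k:ℝ)+1) (show (0:ℝ) ≤ 2*L by linarith [hL1]))]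
        _ ≤ ENNReal.ofReal (2 * L * (ε ^ α) * (t-1)⁻¹ * (1/t) ^ k) :=
            ENNReal.ofReal_le_ofReal hreal
        _ = ENNReal.ofReal (2 * L * (ε ^ α) * (t-1)⁻¹) * (ENNReal.ofReal (1/t)) ^ k := by
            rw [← ENNReal.ofReal_pow (one_div_nonneg.2 ht0.le),
              ← ENNReal.ofReal_mul (mul_nonneg (mul_nonneg (show (0:ℝ) ≤ 2*L by linarith [hL1]) hεα)
                (inv_nonneg.2 htm.le))]
    calc ∫⁻ x in ⋃ k, S k, ENNReal.ofReal |Real.log (g x)| ∂volume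
        ≤ ∑' k, ∫⁻ x in S k, ENNReal.ofReal |Real.log (g x)| ∂volume :=
          lintegral_iUnion_le _ _
      _ ≤ ∑' k, ENNReal.ofReal (2 * L * (ε ^ α) * (t-1)⁻¹) * (ENNReal.ofReal (1/t)) ^ k :=
          ENNReal.tsum_le_tsum hterm
      _ = ENNReal.ofReal (2 * L * (ε ^ α) * (t-1)⁻¹) * ∑' k, (ENNReal.ofReal (1/t)) ^ k :=
          ENNReal.tsum_mul_left
      _ = ENNReal.ofReal (2 * L * (ε ^ α) * (t-1)⁻¹) * (1 - ENNReal.ofReal (1/t))⁻¹ := by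
          rw [ENNReal.tsum_geometric]
      _ = ENNReal.ofReal (2 * L * (ε ^ α) * (t-1)⁻¹) * ENNReal.ofReal ((1 - 1/t)⁻¹) := by
          rw [ENNReal.ofReal_inv_of_pos hti, ENNReal.ofReal_sub _ (one_div_nonneg.2 ht0.le),
            ENNReal.ofReal_one]
      _ = ENNReal.ofReal (2 * L * (ε ^ α) * (t-1)⁻¹ * (1 - 1/t)⁻¹) :=
          (ENNReal.ofReal_mul (mul_nonneg (mul_nonneg (show (0:ℝ) ≤ 2*L by linarith [hL1]) hεα)
            (inv_nonneg.2 htm.le))).symm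
  -- core bound
  have hcore : ∫⁻ x in A, ENNReal.ofReal |Real.log (g x)| ∂volume
      ≤ ENNReal.ofReal (C * ε ^ α * L) := by
    calc ∫⁻ x in A, ENNReal.ofReal |Real.log (g x)| ∂volume
        ≤ ∫⁻ x in P ∪ (Z ∪ ⋃ k, S k), ENNReal.ofReal |Real.log (g x)| ∂volume :=
          lintegral_mono_set hcover
      _ ≤ ∫⁻ x in P, ENNReal.ofReal |Real.log (g x)| ∂volume
          + ∫⁻ x in Z ∪ ⋃ k, S k, ENNReal.ofReal |Real.log (g x)| ∂volume :=
          lintegral_union_le _ _ _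
      _ ≤ ∫⁻ x in P, ENNReal.ofReal |Real.log (g x)| ∂volume
          + (∫⁻ x in Z, ENNReal.ofReal |Real.log (g x)| ∂volume
            + ∫⁻ x in ⋃ k, S k, ENNReal.ofReal |Real.log (g x)| ∂volume) :=
          add_le_add_right (lintegral_union_le _ _ _) _
      _ ≤ ENNReal.ofReal ((Real.log M + L) * ε ^ α)
          + (0 + ENNReal.ofReal (2 * L * (ε ^ α) * (t-1)⁻¹ * (1 - 1/t)⁻¹)) :=
          add_le_add bound1 (add_le_add bound2.le bound3)
      _ = ENNReal.ofReal ((Real.log M + L) * ε ^ α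
          + 2 * L * (ε ^ α) * (t-1)⁻¹ * (1 - 1/t)⁻¹) := by
          have hL0 : (0:ℝ) ≤ L := le_trans zero_le_one hL1
          rw [zero_add, ← ENNReal.ofReal_add
            (mul_nonneg (show (0:ℝ) ≤ Real.log M + L by linarith) hεα)
            (mul_nonneg (mul_nonneg (mul_nonneg (show (0:ℝ) ≤ 2*L by linarith) hεα)
              (inv_nonneg.2 htm.le)) (inv_nonneg.2 hti.le))]
      _ ≤ ENNReal.ofReal (C * ε ^ α * L) := by
          refine ENNReal.ofReal_le_ofReal ?_
          rw [hC]
          have hL0 : (0:ℝ) ≤ L := le_trans zero_le_one hL1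
          have h1 : Real.log M + L ≤ (Real.log M + 1) * L := by nlinarith
          have h2 : (0:ℝ) ≤ (t-1)⁻¹ := inv_nonneg.2 htm.le
          have h3 : (0:ℝ) ≤ (1-1/t)⁻¹ := inv_nonneg.2 hti.le
          nlinarith [mul_le_mul_of_nonneg_right h1 hεα]
  -- conclude
  have hnorm := norm_integral_le_lintegral_norm
    (μ := volume.restrict A) (fun x => Real.log (g x))
  rw [Real.norm_eq_abs] at hnorm
  calc |∫ x in A, Real.log (g x)| 
      ≤ (∫⁻ x in A, ENNReal.ofReal ‖Real.log (g x)‖ ∂volume).toReal := hnorm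
    _ = (∫⁻ x in A, ENNReal.ofReal |Real.log (g x)| ∂volume).toReal := by
        simp only [Real.norm_eq_abs]
    _ ≤ (ENNReal.ofReal (C * ε ^ α * L)).toReal :=
        ENNReal.toReal_mono ENNReal.ofReal_ne_top hcore
    _ = C * ε ^ α * L := ENNReal.toReal_ofReal
        (mul_nonneg (mul_nonneg hC0.le hεα) (le_trans zero_le_one hL1))
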